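/- Let V be a countable set partitioned into layers V = V_0 ⊔ V_1 ⊔ V_2 ⊔ …, and let p be a Markov transition kernel on V such that p(x,·) is supported on V_{i+1} whenever x ∈ V_i. Then for all x, y ∈ V the limit d(x,y) := lim_{n→∞} d_TV( law of X_n^{(x)}, law of X_n^{(y)} ) exists (the sequence being nonincreasing in n), and d(x,y) = (1/2) · sup{ |h(x) − h(y)| : h : V → ℝ, ‖h‖_∞ ≤ 1, and h(z) = Σ_w p(z,w) h(w) for every z ∈ V }. -/

import Mathlib

/-!
A stochastic kernel contracts the `ℓ¹` norm of signed measures, so by Chapman–Kolmogorov the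
total variation distance is nonincreasing once both chains have started, hence converges to
some `L`. A bounded harmonic `h` satisfies `h = Pⁿ h`, which bounds `|h x - h y|` by twice the
distance at every time, hence by `2 L`. Conversely, let `f_n` be the sign of the difference of
the two laws at time `n` and `G_n v = 𝔼 f_n(X_n^{(v)})`. By the layer condition `G_n` is harmonic
at every vertex below layer `n`, it is bounded by `1`, and `G_n x - G_n y` is twice the distance
at time `n`. A pointwise limit of `G_n` along an ultrafilter is then a bounded harmonic function
with `h x - h y = 2 L`.
-/

noncomputable section

namespace LayeredChain

attribute [local instance] Classical.propDecidable

/-- The `n`-step transition probabilities of the Markov kernel `p`. -/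
def pstep {V : Type*} (p : V → V → ℝ) : ℕ → V → V → ℝ
  | 0, x, y => if x = y then 1 else 0
  | (k + 1), x, y => ∑' z, pstep p k x z * p z y

/-- The total variation distance between the laws of `X_n^{(x)}` and `X_n^{(y)}` (the chains
started at `x`, resp. `y`, observed at layer `n`). -/
def tvAt {V : Type*} (p : V → V → ℝ) (layer : V → ℕ) (x y : V) (n : ℕ) : ℝ :=
  (1 / 2) * ∑' v, |pstep p (n - layer x) x v - pstep p (n - layer y) y v|

open Filter Topology

lemma abs_sign_le_one (r : ℝ) : |(SignType.sign r : ℝ)| ≤ 1 := by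
  rcases lt_trichotomy r 0 with h | h | h <;> simp [h]

section Summation

variable {V : Type*}

lemma summable_mul_of_abs_le {c f : V → ℝ} {C : ℝ} (hc : Summable c) (hf : ∀ v, |f v| ≤ C) :
    Summable fun v => c v * f v :=
  (hc.abs.mul_right C).of_norm_bounded fun v => by
    rw [Real.norm_eq_abs, abs_mul]
    exact mul_le_mul_of_nonneg_left (hf v) (abs_nonneg _)

lemma abs_tsum_mul_le_tsum_abs_mul {c f : V → ℝ} {C : ℝ} (hc : Summable c)
    (hf : ∀ v, |f v| ≤ C) : |∑' v, c v * f v| ≤ (∑' v, |c v|) * C :=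
  tsum_of_norm_bounded (hc.abs.hasSum.mul_right C) fun v => by
    rw [Real.norm_eq_abs, abs_mul]
    exact mul_le_mul_of_nonneg_left (hf v) (abs_nonneg _)

lemma tsum_mul_sub_tsum_mul {a b f : V → ℝ} {C : ℝ} (ha : Summable a) (hb : Summable b)
    (hf : ∀ v, |f v| ≤ C) :
    ∑' v, a v * f v - ∑' v, b v * f v = ∑' v, (a v - b v) * f v := by
  rw [← (summable_mul_of_abs_le ha hf).tsum_sub (summable_mul_of_abs_le hb hf)]
  simp_rw [sub_mul]

end Summation

structure IsStochastic {V : Type*} (K : V → V → ℝ) : Prop where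
  nonneg : ∀ x y, 0 ≤ K x y
  tsum_eq_one : ∀ x, ∑' y, K x y = 1

namespace IsStochastic

variable {V : Type*} {K L : V → V → ℝ}

lemma summable (hK : IsStochastic K) (x : V) : Summable (K x) := by
  by_contra h
  simpa [tsum_eq_zero_of_not_summable h] using hK.tsum_eq_one x

lemma le_one (hK : IsStochastic K) (x y : V) : K x y ≤ 1 :=
  hK.tsum_eq_one x ▸ (hK.summable x).le_tsum y fun z _ => hK.nonneg x z

lemma abs_tsum_mul_le {f : V → ℝ} {C : ℝ} (hK : IsStochastic K) (hf : ∀ v, |f v| ≤ C)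
    (x : V) : |∑' y, K x y * f y| ≤ C := by
  simpa [abs_of_nonneg (hK.nonneg x _), hK.tsum_eq_one x] using
    abs_tsum_mul_le_tsum_abs_mul (hK.summable x) hf

/-- Fubini: the family is dominated by the summable `|c w| * K w z * C`. -/
lemma tsum_mul_tsum_comm (hK : IsStochastic K) {c f : V → ℝ} {C : ℝ} (hc : Summable c)
    (hf : ∀ z, |f z| ≤ C) :
    ∑' w, c w * ∑' z, K w z * f z = ∑' z, (∑' w, c w * K w z) * f z := by
  let g : V × V → ℝ := fun q => |c q.1| * (K q.1 q.2 * C)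
  have hbound : ∀ q : V × V, ‖c q.1 * (K q.1 q.2 * f q.2)‖ ≤ g q := fun q => by
    rw [Real.norm_eq_abs, abs_mul, abs_mul, abs_of_nonneg (hK.nonneg _ _)]
    exact mul_le_mul_of_nonneg_left
      (mul_le_mul_of_nonneg_left (hf _) (hK.nonneg _ _)) (abs_nonneg _)
  have hrow : ∀ w, ∑' z, g (w, z) = |c w| * C := fun w => by
    simp only [g, tsum_mul_left, tsum_mul_right, hK.tsum_eq_one, one_mul]
  have hg : Summable g :=
    (summable_prod_of_nonneg fun q => (norm_nonneg _).trans (hbound q)).mpr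
      ⟨fun w => ((hK.summable w).mul_right C).mul_left |c w|,
        by simpa only [hrow] using hc.abs.mul_right C⟩
  have hsum : Summable (Function.uncurry fun w z => c w * (K w z * f z)) :=
    hg.of_norm_bounded hbound
  calc ∑' w, c w * ∑' z, K w z * f z = ∑' w, ∑' z, c w * (K w z * f z) := by
        simp_rw [tsum_mul_left]
    _ = ∑' z, ∑' w, c w * (K w z * f z) := hsum.tsum_comm.symm
    _ = ∑' z, (∑' w, c w * K w z) * f z := by
        simp_rw [← tsum_mul_right, mul_assoc]

lemma comp (hK : IsStochastic K) (hL : IsStochastic L) :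
    IsStochastic fun x y => ∑' z, K x z * L z y where
  nonneg x y := tsum_nonneg fun z => mul_nonneg (hK.nonneg x z) (hL.nonneg z y)
  tsum_eq_one x := by
    have h := hL.tsum_mul_tsum_comm (hK.summable x) (f := fun _ => 1) (C := 1) (by simp)
    simpa [hL.tsum_eq_one, hK.tsum_eq_one] using h.symm

lemma tsum_abs_tsum_mul_le (hK : IsStochastic K) {c : V → ℝ} (hc : Summable c) :
    ∑' v, |∑' w, c w * K w v| ≤ ∑' w, |c w| := by
  set s : V → ℝ := fun v => SignType.sign (∑' w, c w * K w v)
  calc ∑' v, |∑' w, c w * K w v| = ∑' v, (∑' w, c w * K w v) * s v :=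
        tsum_congr fun v => (self_mul_sign _).symm
    _ = ∑' w, c w * ∑' v, K w v * s v :=
        (hK.tsum_mul_tsum_comm hc fun v => abs_sign_le_one _).symm
    _ ≤ (∑' w, |c w|) * 1 :=
        (le_abs_self _).trans <|
          abs_tsum_mul_le_tsum_abs_mul hc (hK.abs_tsum_mul_le fun v => abs_sign_le_one _)
    _ = ∑' w, |c w| := mul_one _

end IsStochastic

section Steps

variable {V : Type*} {p : V → V → ℝ}

lemma tsum_pstep_zero_mul (f : V → ℝ) (x : V) : ∑' w, pstep p 0 x w * f w = f x := by
  simp [pstep]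

lemma tsum_mul_pstep_zero (f : V → ℝ) (v : V) : ∑' w, f w * pstep p 0 w v = f v := by
  simp [pstep]

lemma pstep_one (x y : V) : pstep p 1 x y = p x y :=
  tsum_pstep_zero_mul (p · y) x

lemma isStochastic_pstep (hp : IsStochastic p) : ∀ n, IsStochastic (pstep p n)
  | 0 => ⟨fun x y => by unfold pstep; split_ifs <;> norm_num, fun x => by simp [pstep]⟩
  | n + 1 => (isStochastic_pstep hp n).comp hp

lemma pstep_add (hp : IsStochastic p) (a : ℕ) :
    ∀ b (x v : V), pstep p (a + b) x v = ∑' w, pstep p a x w * pstep p b w v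
  | 0, x, v => (tsum_mul_pstep_zero _ v).symm
  | b + 1, x, v => by
    calc pstep p (a + b + 1) x v = ∑' z, (∑' w, pstep p a x w * pstep p b w z) * p z v := by
          simp_rw [← pstep_add hp a b]; rfl
      _ = ∑' w, pstep p a x w * pstep p (b + 1) w v :=
          ((isStochastic_pstep hp b).tsum_mul_tsum_comm ((isStochastic_pstep hp a).summable x)
            fun z => by rw [abs_of_nonneg (hp.nonneg z v)]; exact hp.le_one z v).symm

lemma eq_tsum_pstep_mul_of_harmonic (hp : IsStochastic p) {h : V → ℝ} {C : ℝ}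
    (hb : ∀ v, |h v| ≤ C) (hh : ∀ z, h z = ∑' w, p z w * h w) :
    ∀ n (x : V), h x = ∑' w, pstep p n x w * h w
  | 0, x => (tsum_pstep_zero_mul h x).symm
  | n + 1, x => by
    calc h x = ∑' w, pstep p n x w * ∑' z, p w z * h z := by
          rw [eq_tsum_pstep_mul_of_harmonic hp hb hh n x]; simp_rw [← hh]
      _ = ∑' z, pstep p (n + 1) x z * h z :=
          hp.tsum_mul_tsum_comm ((isStochastic_pstep hp n).summable x) hb

end Steps

section Chain

variable {V : Type*} {p : V → V → ℝ} {layer : V → ℕ}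

/-- The law of `X_n^{(v)}`. For `n < layer v` the truncated subtraction makes it the point
mass at `v`. -/
def law (p : V → V → ℝ) (layer : V → ℕ) (v : V) (n : ℕ) : V → ℝ :=
  pstep p (n - layer v) v

/-- `𝔼 f(X_n^{(v)})`. -/
def mean (p : V → V → ℝ) (layer : V → ℕ) (f : V → ℝ) (n : ℕ) (v : V) : ℝ :=
  ∑' w, law p layer v n w * f w

lemma tvAt_eq_tsum_abs_law (x y : V) (n : ℕ) :
    tvAt p layer x y n = 1 / 2 * ∑' w, |law p layer x n w - law p layer y n w| := rfl

lemma tvAt_nonneg (x y : V) (n : ℕ) : 0 ≤ tvAt p layer x y n := by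
  rw [tvAt_eq_tsum_abs_law]
  positivity

lemma summable_law (hp : IsStochastic p) (v : V) (n : ℕ) : Summable (law p layer v n) :=
  (isStochastic_pstep hp _).summable v

lemma law_eq_tsum_law_mul_pstep (hp : IsStochastic p) {v : V} {m n : ℕ} (hm : layer v ≤ m)
    (hmn : m ≤ n) (u : V) :
    law p layer v n u = ∑' w, law p layer v m w * pstep p (n - m) w u := by
  rw [law, show n - layer v = (m - layer v) + (n - m) by omega, pstep_add hp]
  rfl

lemma tvAt_le_tvAt (hp : IsStochastic p) {x y : V} {m n : ℕ}
    (hm : max (layer x) (layer y) ≤ m) (hmn : m ≤ n) :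
    tvAt p layer x y n ≤ tvAt p layer x y m := by
  have hK := isStochastic_pstep hp (n - m)
  have hdiff : ∀ u, law p layer x n u - law p layer y n u =
      ∑' w, (law p layer x m w - law p layer y m w) * pstep p (n - m) w u := fun u => by
    rw [law_eq_tsum_law_mul_pstep hp (le_of_max_le_left hm) hmn,
      law_eq_tsum_law_mul_pstep hp (le_of_max_le_right hm) hmn,
      tsum_mul_sub_tsum_mul (summable_law hp x m) (summable_law hp y m)
        (fun w => (abs_of_nonneg (hK.nonneg w u)).trans_le (hK.le_one w u))]
  rw [tvAt_eq_tsum_abs_law, tvAt_eq_tsum_abs_law, tsum_congr fun u => congrArg abs (hdiff u)]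
  exact mul_le_mul_of_nonneg_left
    (hK.tsum_abs_tsum_mul_le ((summable_law hp x m).sub (summable_law hp y m))) (by norm_num)

lemma abs_sub_le_two_mul_tvAt (hp : IsStochastic p) {h : V → ℝ} (hb : ∀ v, |h v| ≤ 1)
    (hh : ∀ z, h z = ∑' w, p z w * h w) (x y : V) (n : ℕ) :
    |h x - h y| ≤ 2 * tvAt p layer x y n := by
  have hdiff : h x - h y = ∑' w, (law p layer x n w - law p layer y n w) * h w := by
    rw [← tsum_mul_sub_tsum_mul (summable_law hp x n) (summable_law hp y n) hb]
    congr 1 <;> exact eq_tsum_pstep_mul_of_harmonic hp hb hh _ _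
  rw [hdiff, tvAt_eq_tsum_abs_law]
  linarith [abs_tsum_mul_le_tsum_abs_mul
    ((summable_law (layer := layer) hp x n).sub (summable_law (layer := layer) hp y n)) hb]

lemma abs_mean_le (hp : IsStochastic p) {f : V → ℝ} {C : ℝ} (hf : ∀ v, |f v| ≤ C) (n : ℕ)
    (v : V) : |mean p layer f n v| ≤ C :=
  (isStochastic_pstep hp _).abs_tsum_mul_le hf v

/-- Before time `n` the function `v ↦ 𝔼 f(X_n^{(v)})` is harmonic: by the layer condition, one
step from `z` lands in layer `layer z + 1`, from where `n - layer z - 1` steps remain. -/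
lemma mean_eq_tsum_mul_mean (hp : IsStochastic p)
    (hlayer : ∀ x y, p x y ≠ 0 → layer y = layer x + 1) {f : V → ℝ} {C : ℝ}
    (hf : ∀ v, |f v| ≤ C) {n : ℕ} {z : V} (hz : layer z < n) :
    mean p layer f n z = ∑' u, p z u * mean p layer f n u := by
  set m := n - layer z - 1
  have hlaw : ∀ w, law p layer z n w = ∑' u, p z u * pstep p m u w := fun w => by
    rw [law, show n - layer z = 1 + m by omega, pstep_add hp]
    simp_rw [pstep_one]
  calc mean p layer f n z = ∑' u, p z u * ∑' w, pstep p m u w * f w := by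
        rw [mean, (isStochastic_pstep hp m).tsum_mul_tsum_comm (hp.summable z) hf]
        simp_rw [hlaw]
    _ = ∑' u, p z u * mean p layer f n u := tsum_congr fun u => by
        by_cases hzu : p z u = 0
        · simp [hzu]
        · rw [mean, law, show n - layer u = m by have := hlayer z u hzu; omega]

lemma mean_sign_sub_mean_sign (hp : IsStochastic p) (x y : V) (n : ℕ) :
    let f := fun w => (SignType.sign (law p layer x n w - law p layer y n w) : ℝ)
    mean p layer f n x - mean p layer f n y = 2 * tvAt p layer x y n := by
  intro f
  rw [mean, mean, tsum_mul_sub_tsum_mul (summable_law hp x n) (summable_law hp y n)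
    fun w => abs_sign_le_one _, tvAt_eq_tsum_abs_law]
  simp_rw [self_mul_sign]
  ring

end Chain

lemma exists_tendsto_of_abs_le {α : Type*} (U : Ultrafilter α) {u : α → ℝ} {C : ℝ}
    (hu : ∀ a, |u a| ≤ C) : ∃ c, |c| ≤ C ∧ Tendsto u U (𝓝 c) := by
  obtain ⟨c, hc, hlim⟩ := isCompact_Icc.ultrafilter_le_nhds (U.map u)
    (tendsto_principal.mpr (Eventually.of_forall fun a => abs_le.mp (hu a)))
  exact ⟨c, abs_le.mpr hc, hlim⟩

lemma IsStochastic.harmonic_of_tendsto {V ι : Type*} {K : V → V → ℝ} (hK : IsStochastic K)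
    {l : Filter ι} [l.NeBot] {G : ι → V → ℝ} {h : V → ℝ} {C : ℝ} (hG : ∀ i v, |G i v| ≤ C)
    (hlim : ∀ v, Tendsto (G · v) l (𝓝 (h v)))
    (hharm : ∀ z, ∀ᶠ i in l, G i z = ∑' u, K z u * G i u) (z : V) :
    h z = ∑' u, K z u * h u := by
  refine tendsto_nhds_unique (hlim z) (Tendsto.congr' (EventuallyEq.symm (hharm z)) ?_)
  refine tendsto_tsum_of_dominated_convergence ((hK.summable z).mul_right C)
    (fun u => (hlim u).const_mul _) (Eventually.of_forall fun i u => ?_)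
  rw [Real.norm_eq_abs, abs_mul, abs_of_nonneg (hK.nonneg z u)]
  exact mul_le_mul_of_nonneg_left (hG i u) (hK.nonneg z u)

section Limit

variable {V : Type*} {p : V → V → ℝ} {layer : V → ℕ}

lemma exists_tendsto_tvAt (hp : IsStochastic p) (x y : V) :
    ∃ L, Tendsto (tvAt p layer x y) atTop (𝓝 L) := by
  set M := max (layer x) (layer y)
  have hanti : Antitone fun k => tvAt p layer x y (k + M) := fun i j hij =>
    tvAt_le_tvAt hp (by omega) (by omega)
  have hbdd : BddBelow (Set.range fun k => tvAt p layer x y (k + M)) :=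
    ⟨0, by rintro _ ⟨k, rfl⟩; exact tvAt_nonneg x y _⟩
  exact ⟨_, (tendsto_add_atTop_iff_nat M).mp (tendsto_atTop_ciInf hanti hbdd)⟩

lemma exists_harmonic_two_mul_eq (hp : IsStochastic p)
    (hlayer : ∀ x y, p x y ≠ 0 → layer y = layer x + 1) {x y : V} {L : ℝ}
    (hL : Tendsto (tvAt p layer x y) atTop (𝓝 L)) :
    ∃ h : V → ℝ, (∀ v, |h v| ≤ 1) ∧ (∀ z, h z = ∑' w, p z w * h w) ∧ 2 * L = |h x - h y| := by
  set f : ℕ → V → ℝ := fun n w => SignType.sign (law p layer x n w - law p layer y n w)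
  have hf : ∀ n w, |f n w| ≤ 1 := fun n w => abs_sign_le_one _
  set G : ℕ → V → ℝ := fun n => mean p layer (f n) n
  have hG : ∀ n v, |G n v| ≤ 1 := fun n => abs_mean_le hp (hf n) n
  set U := Ultrafilter.of (atTop : Filter ℕ)
  have hU : (U : Filter ℕ) ≤ atTop := Ultrafilter.of_le _
  choose h hb hlim using fun v => exists_tendsto_of_abs_le U fun n => hG n v
  have hharm : ∀ z, h z = ∑' w, p z w * h w := hp.harmonic_of_tendsto hG hlim fun z =>
    ((eventually_gt_atTop (layer z)).filter_mono hU).mono fun n hn =>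
      mean_eq_tsum_mul_mean hp hlayer (hf n) hn
  have hxy : h x - h y = 2 * L := tendsto_nhds_unique ((hlim x).sub (hlim y)) <|
    ((hL.const_mul 2).mono_left hU).congr fun n => (mean_sign_sub_mean_sign hp x y n).symm
  have hL0 : 0 ≤ L := ge_of_tendsto' hL (tvAt_nonneg x y)
  exact ⟨h, hb, hharm, by rw [hxy, abs_of_nonneg (by linarith)]⟩

end Limit

theorem tv_limit_eq_sup_harmonic_general {V : Type*} (layer : V → ℕ)
    (p : V → V → ℝ) (hp0 : ∀ x y, 0 ≤ p x y) (hp1 : ∀ x, ∑' y, p x y = 1)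
    (hlayer : ∀ x y, p x y ≠ 0 → layer y = layer x + 1)
    (x y : V) :
    (∀ m n : ℕ, max (layer x) (layer y) ≤ m → m ≤ n →
      tvAt p layer x y n ≤ tvAt p layer x y m) ∧
    Filter.Tendsto (fun n => tvAt p layer x y n) Filter.atTop
      (nhds ((1 / 2) * sSup { r : ℝ | ∃ h : V → ℝ,
        (∀ v, |h v| ≤ 1) ∧ (∀ z, h z = ∑' w, p z w * h w) ∧ r = |h x - h y| })) := by
  have hp : IsStochastic p := ⟨hp0, hp1⟩
  refine ⟨fun m n hm hmn => tvAt_le_tvAt hp hm hmn, ?_⟩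
  obtain ⟨L, hL⟩ := exists_tendsto_tvAt (layer := layer) hp x y
  have hsup : sSup { r : ℝ | ∃ h : V → ℝ,
      (∀ v, |h v| ≤ 1) ∧ (∀ z, h z = ∑' w, p z w * h w) ∧ r = |h x - h y| } = 2 * L :=
    IsGreatest.csSup_eq ⟨exists_harmonic_two_mul_eq hp hlayer hL, by
      rintro _ ⟨h, hb, hh, rfl⟩
      exact ge_of_tendsto' (hL.const_mul 2)
        (abs_sub_le_two_mul_tvAt (layer := layer) hp hb hh x y)⟩
  rwa [hsup, one_div, inv_mul_cancel_left₀ two_ne_zero]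

/-- Let `V` be a countable set partitioned into layers `V = V₀ ⊔ V₁ ⊔ V₂ ⊔ …` and let `p` be a
Markov transition kernel on `V` such that `p(x,·)` is supported on `V_{i+1}` whenever `x ∈ V_i`.
Then for all `x, y ∈ V` the limit `d(x,y) = lim_n d_TV(X_n^{(x)}, X_n^{(y)})` exists (the
sequence being nonincreasing in `n`), and equals
`(1/2)·sup{ |h(x) − h(y)| : h : V → ℝ bounded by 1 and harmonic }`. -/
theorem tv_limit_eq_sup_harmonic {V : Type*} [Countable V] (layer : V → ℕ)
    (p : V → V → ℝ) (hp0 : ∀ x y, 0 ≤ p x y) (hp1 : ∀ x, ∑' y, p x y = 1)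
    (hlayer : ∀ x y, p x y ≠ 0 → layer y = layer x + 1)
    (x y : V) :
    (∀ m n : ℕ, max (layer x) (layer y) ≤ m → m ≤ n →
      tvAt p layer x y n ≤ tvAt p layer x y m) ∧
    Filter.Tendsto (fun n => tvAt p layer x y n) Filter.atTop
      (nhds ((1 / 2) * sSup { r : ℝ | ∃ h : V → ℝ,
        (∀ v, |h v| ≤ 1) ∧ (∀ z, h z = ∑' w, p z w * h w) ∧ r = |h x - h y| })) :=
  tv_limit_eq_sup_harmonic_general layer p hp0 hp1 hlayer x y

end LayeredChain
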